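/- Let W be the real vector space of n×n Hermitian complex matrices. For traceless Hermitian a define Y_a : W → W by Y_a(ξ) := a⊙ξ − Tr(aξ)·ξ, and X_a : W → W by X_a(ξ) := [[ξ, a]] = (i/2)(ξa − aξ). With the vector-field commutator [F, G](ξ) := DG(ξ)[F(ξ)] − DF(ξ)[G(ξ)], one has [Y_a, Y_b] = −X_{[[a,b]]} for all traceless Hermitian a, b. Together with the other two relations this means the gradient-like and Hamiltonian vector fields associated with traceless Hermitian matrices close on a realization of the Lie algebra sl(n, ℂ). -/

import Mathlib

open Matrix

attribute [local instance] Matrix.frobeniusNormedAddCommGroup Matrix.frobeniusNormedSpace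

/-- The Jordan product of two complex matrices: `x ⊙ y = (xy + yx)/2`. -/
noncomputable def jordanProd {n : ℕ} (x y : Matrix (Fin n) (Fin n) ℂ) :
    Matrix (Fin n) (Fin n) ℂ :=
  (1 / 2 : ℂ) • (x * y + y * x)

/-- The Lie product of two complex matrices: `[[x, y]] = (i/2)(xy − yx)`. -/
noncomputable def lieProd {n : ℕ} (x y : Matrix (Fin n) (Fin n) ℂ) :
    Matrix (Fin n) (Fin n) ℂ :=
  (Complex.I / 2) • (x * y - y * x)

/-- The Hamiltonian vector field associated with a (traceless Hermitian) matrix `a`: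
`X_a(ξ) := [[ξ, a]]`. -/
noncomputable def hamVF {n : ℕ} (a : Matrix (Fin n) (Fin n) ℂ) :
    Matrix (Fin n) (Fin n) ℂ → Matrix (Fin n) (Fin n) ℂ :=
  fun ξ => lieProd ξ a

/-- The gradient-like vector field associated with a (traceless Hermitian) matrix `a`:
`Y_a(ξ) := a ⊙ ξ − Tr(aξ)·ξ`. -/
noncomputable def gradVF {n : ℕ} (a : Matrix (Fin n) (Fin n) ℂ) :
    Matrix (Fin n) (Fin n) ℂ → Matrix (Fin n) (Fin n) ℂ :=
  fun ξ => jordanProd a ξ - (Matrix.trace (a * ξ)) • ξ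

/-!
Each `Y_a` has the form `ξ ↦ A ξ - φ ξ • ξ` with `A = a ⊙ ·` and `φ = Tr (a * ·)` complex
linear. For two fields of this form the terms of degree two and three cancel in the commutator,
leaving `[B, A] ξ - (ψ (A ξ) - φ (B ξ)) • ξ`. For Jordan multiplications the scalar vanishes,
since `Tr (b (a ⊙ ξ))` is symmetric in `a` and `b` by cyclicity of the trace, and
`b ⊙ (a ⊙ ξ) - a ⊙ (b ⊙ ξ) = (ξ [a, b] - [a, b] ξ) / 4 = -[[ξ, [[a, b]]]]`.
-/

section SubSmulSelf

variable {𝕜 E : Type*} [NontriviallyNormedField 𝕜] [NormedAddCommGroup E] [NormedSpace 𝕜 E]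
  (A B : E →L[𝕜] E) (φ ψ : E →L[𝕜] 𝕜) (x : E)

theorem hasFDerivAt_sub_smul_self :
    HasFDerivAt (fun y => A y - φ y • y) (A - (φ x • ContinuousLinearMap.id 𝕜 E + φ.smulRight x))
      x :=
  A.hasFDerivAt.sub (φ.hasFDerivAt.smul (hasFDerivAt_id x))

theorem fderiv_sub_smul_self_apply (v : E) :
    fderiv 𝕜 (fun y => A y - φ y • y) x v = A v - φ v • x - φ x • v := by
  rw [(hasFDerivAt_sub_smul_self A φ x).fderiv]
  simp only [_root_.sub_apply, _root_.add_apply, _root_.smul_apply, ContinuousLinearMap.id_apply,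
    ContinuousLinearMap.smulRight_apply]
  abel

theorem fderiv_sub_smul_self_commutator :
    fderiv 𝕜 (fun y => B y - ψ y • y) x (A x - φ x • x) -
        fderiv 𝕜 (fun y => A y - φ y • y) x (B x - ψ x • x) =
      B (A x) - A (B x) - (ψ (A x) - φ (B x)) • x := by
  rw [fderiv_sub_smul_self_apply, fderiv_sub_smul_self_apply]
  simp only [map_sub, map_smul, smul_eq_mul]
  module

end SubSmulSelf

section Matrices

variable {n : ℕ}

noncomputable def jordanProdCLM (a : Matrix (Fin n) (Fin n) ℂ) :
    Matrix (Fin n) (Fin n) ℂ →L[ℂ] Matrix (Fin n) (Fin n) ℂ :=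
  LinearMap.toContinuousLinearMap ((1 / 2 : ℂ) • (LinearMap.mulLeft ℂ a + LinearMap.mulRight ℂ a))

noncomputable def traceMulCLM (a : Matrix (Fin n) (Fin n) ℂ) :
    Matrix (Fin n) (Fin n) ℂ →L[ℂ] ℂ :=
  LinearMap.toContinuousLinearMap ((Matrix.traceLinearMap _ ℂ ℂ).comp (LinearMap.mulLeft ℂ a))

theorem gradVF_eq_sub_smul_self (a : Matrix (Fin n) (Fin n) ℂ) :
    gradVF a = fun y => jordanProdCLM a y - traceMulCLM a y • y :=
  rfl

theorem trace_mul_jordanProd_comm (a b x : Matrix (Fin n) (Fin n) ℂ) :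
    (b * jordanProd a x).trace = (a * jordanProd b x).trace := by
  simp only [jordanProd, Matrix.mul_smul, trace_smul, mul_add, trace_add, ← mul_assoc]
  rw [trace_mul_cycle b x a, trace_mul_cycle a x b, add_comm]

theorem jordanProd_jordanProd_sub_swap (a b x : Matrix (Fin n) (Fin n) ℂ) :
    jordanProd b (jordanProd a x) - jordanProd a (jordanProd b x) = -hamVF (lieProd a b) x := by
  simp only [hamVF, lieProd, jordanProd, mul_add, add_mul, mul_sub, sub_mul, Matrix.mul_smul,
    Matrix.smul_mul, smul_add, smul_sub, smul_smul, mul_assoc]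
  match_scalars <;> ring_nf <;> simp only [Complex.I_sq] <;> ring

theorem fderiv_real_gradVF (a x : Matrix (Fin n) (Fin n) ℂ) :
    fderiv ℝ (gradVF a) x = (fderiv ℂ (gradVF a) x).restrictScalars ℝ := by
  rw [gradVF_eq_sub_smul_self]
  exact ((hasFDerivAt_sub_smul_self _ _ x).differentiableAt).fderiv_restrictScalars ℝ

end Matrices

theorem gradVF_commutator_general {n : ℕ} (a b : Matrix (Fin n) (Fin n) ℂ) :
    ∀ ξ : Matrix (Fin n) (Fin n) ℂ, ξ.IsHermitian →
      fderiv ℝ (gradVF b) ξ (gradVF a ξ) - fderiv ℝ (gradVF a) ξ (gradVF b ξ) =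
        -(hamVF (lieProd a b) ξ) := by
  intro ξ _
  rw [fderiv_real_gradVF, fderiv_real_gradVF, ContinuousLinearMap.coe_restrictScalars',
    ContinuousLinearMap.coe_restrictScalars', gradVF_eq_sub_smul_self, gradVF_eq_sub_smul_self]
  refine (fderiv_sub_smul_self_commutator _ _ _ _ ξ).trans ?_
  show jordanProd b (jordanProd a ξ) - jordanProd a (jordanProd b ξ) -
      ((b * jordanProd a ξ).trace - (a * jordanProd b ξ).trace) • ξ = _
  rw [trace_mul_jordanProd_comm, sub_self, zero_smul, sub_zero]
  exact jordanProd_jordanProd_sub_swap a b ξ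

/-- On the real vector space of Hermitian matrices, the gradient-like vector fields
`Y_a(ξ) = a ⊙ ξ − Tr(aξ)·ξ` associated with traceless Hermitian matrices satisfy
`[Y_a, Y_b] = −X_{[[a,b]]}` (with `X_c(ξ) = [[ξ, c]]`), where the commutator of vector
fields is `[F, G](ξ) := DG(ξ)[F(ξ)] − DF(ξ)[G(ξ)]` with `D` the Fréchet derivative.
Together with the other two relations, the gradient-like and Hamiltonian vector fields
close on a realization of the Lie algebra `sl(n, ℂ)`. -/
theorem gradVF_commutator {n : ℕ} (a b : Matrix (Fin n) (Fin n) ℂ)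
    (ha : a.IsHermitian) (hb : b.IsHermitian)
    (ha0 : a.trace = 0) (hb0 : b.trace = 0) :
    ∀ ξ : Matrix (Fin n) (Fin n) ℂ, ξ.IsHermitian →
      fderiv ℝ (gradVF b) ξ (gradVF a ξ) - fderiv ℝ (gradVF a) ξ (gradVF b ξ) =
        -(hamVF (lieProd a b) ξ) :=
  gradVF_commutator_general a b
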